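/- Let σ > 0 and, for each N ≥ 2, let X₁, …, X_N be independent random variables each distributed as the real Gaussian measure with mean 0 and variance σ². Then the probability that any coefficient exceeds the universal threshold λ_N = σ√(2 log N) tends to zero: P(max_{1 ≤ i ≤ N} |X_i| > σ√(2 log N)) → 0 as N → ∞. (The property justifying the universal threshold λ = σ√(2 log N): under Gaussian assumptions it suppresses all noise-only coefficients of a length-N sequence with probability tending to one.) -/

import Mathlib

open MeasureTheory ProbabilityTheory Filter Real Set
open scoped NNReal ENNReal Topology

/-!
A union bound over the `N` coordinates reduces the claim to `N * P(|X| > t) → 0` for a single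
`N(0, σ²)` variable `X` at `t = σ √(2 log N)`. Mills' ratio bound `P(X > t) ≤ σ² φ(t) / t`, with
`φ` the Gaussian density, comes from `1 ≤ x / t` on `(t, ∞)` and `∫ₜ^∞ x φ(x) dx = σ² φ(t)`.
At the universal threshold `φ(t) = 1 / (√(2π) σ N)`, so `N * P(|X| > t) ≤ 1 / √(π log N)`.
-/

lemma measure_exists_mem_le_card_mul {Ω E ι : Type*} [MeasurableSpace Ω] [MeasurableSpace E]
    [Fintype ι] {P : Measure Ω} {ν : Measure E} {X : ι → Ω → E} (hX : ∀ i, HasLaw (X i) ν P)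
    {s : Set E} (hs : MeasurableSet s) :
    P {ω | ∃ i, X i ω ∈ s} ≤ Fintype.card ι * ν s := by
  calc P {ω | ∃ i, X i ω ∈ s} = P (⋃ i, X i ⁻¹' s) := by
        congr 1
        ext ω
        simp
    _ ≤ ∑ i, P (X i ⁻¹' s) := measure_iUnion_fintype_le P _
    _ = ∑ _i : ι, ν s := Finset.sum_congr rfl fun i _ => by
        rw [← (hX i).map_eq, Measure.map_apply_of_aemeasurable (hX i).aemeasurable hs]
    _ = Fintype.card ι * ν s := by simp

namespace ProbabilityTheory

lemma hasDerivAt_gaussianPDFReal (μ : ℝ) (v : ℝ≥0) (x : ℝ) :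
    HasDerivAt (gaussianPDFReal μ v) (-((x - μ) / v) * gaussianPDFReal μ v x) x := by
  have hexponent : HasDerivAt (fun y => -(y - μ) ^ 2 / (2 * v)) (-(2 * (x - μ)) / (2 * v)) x := by
    simpa using (((hasDerivAt_id x).sub_const μ).pow 2).neg.div_const (2 * (v : ℝ))
  rw [gaussianPDFReal_def]
  refine (hexponent.exp.const_mul (√(2 * π * v))⁻¹).congr_deriv ?_
  ring

lemma tendsto_gaussianPDFReal_atTop (μ : ℝ) (v : ℝ≥0) :
    Tendsto (gaussianPDFReal μ v) atTop (𝓝 0) := by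
  rcases eq_or_ne v 0 with rfl | hv
  · rw [gaussianPDFReal_zero_var]
    exact tendsto_const_nhds
  have hexponent : Tendsto (fun x => -(x - μ) ^ 2 / (2 * v)) atTop atBot := by
    refine (tendsto_neg_atTop_atBot.comp ?_).atBot_div_const (by positivity)
    exact (tendsto_pow_atTop two_ne_zero).comp (tendsto_atTop_add_const_right _ _ tendsto_id)
  rw [gaussianPDFReal_def]
  simpa using (tendsto_exp_comp_nhds_zero.mpr hexponent).const_mul (√(2 * π * v))⁻¹

lemma integral_Ioi_mul_gaussianPDFReal {t : ℝ} (v : ℝ≥0) (ht : 0 ≤ t) :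
    IntegrableOn (fun x => x * gaussianPDFReal 0 v x) (Ioi t) ∧
      ∫ x in Ioi t, x * gaussianPDFReal 0 v x = v * gaussianPDFReal 0 v t := by
  have hderiv : ∀ x ∈ Ici t,
      HasDerivAt (fun y => -v * gaussianPDFReal 0 v y) (x * gaussianPDFReal 0 v x) x := by
    intro x _
    refine ((hasDerivAt_gaussianPDFReal 0 v x).const_mul (-(v : ℝ))).congr_deriv ?_
    rcases eq_or_ne v 0 with rfl | hv
    · simp
    · field_simp
      ring
  have hnonneg : ∀ x ∈ Ioi t, 0 ≤ x * gaussianPDFReal 0 v x := fun x hx =>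
    mul_nonneg (ht.trans (le_of_lt hx)) (gaussianPDFReal_nonneg 0 v x)
  have hlim : Tendsto (fun y => -v * gaussianPDFReal 0 v y) atTop (𝓝 0) := by
    simpa using (tendsto_gaussianPDFReal_atTop 0 v).const_mul (-(v : ℝ))
  refine ⟨integrableOn_Ioi_deriv_of_nonneg' hderiv hnonneg hlim, ?_⟩
  rw [integral_Ioi_of_hasDerivAt_of_nonneg' hderiv hnonneg hlim]
  ring

lemma gaussianReal_Ioi_le (v : ℝ≥0) {t : ℝ} (ht : 0 < t) :
    gaussianReal 0 v (Ioi t) ≤ ENNReal.ofReal (v / t * gaussianPDFReal 0 v t) := by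
  rcases eq_or_ne v 0 with rfl | hv
  · simp [gaussianReal_zero_var, ht.not_gt]
  obtain ⟨hint, hval⟩ := integral_Ioi_mul_gaussianPDFReal v ht.le
  rw [gaussianReal_apply_eq_integral 0 hv]
  refine ENNReal.ofReal_le_ofReal ?_
  calc ∫ x in Ioi t, gaussianPDFReal 0 v x
      ≤ ∫ x in Ioi t, t⁻¹ * (x * gaussianPDFReal 0 v x) := by
        refine setIntegral_mono_on (integrable_gaussianPDFReal 0 v).integrableOn
          (hint.const_mul _) measurableSet_Ioi fun x hx => ?_
        rw [← mul_assoc, le_mul_iff_one_le_left (gaussianPDFReal_pos 0 v x hv),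
          inv_mul_eq_div, one_le_div ht]
        exact le_of_lt hx
    _ = v / t * gaussianPDFReal 0 v t := by
        rw [integral_const_mul, hval]
        ring

lemma gaussianReal_abs_gt_le (v : ℝ≥0) {t : ℝ} (ht : 0 < t) :
    gaussianReal 0 v {x | t < |x|} ≤ ENNReal.ofReal (2 * (v / t * gaussianPDFReal 0 v t)) := by
  have hbound_nonneg : 0 ≤ v / t * gaussianPDFReal 0 v t :=
    mul_nonneg (by positivity) (gaussianPDFReal_nonneg 0 v t)
  have hsplit : {x : ℝ | t < |x|} = Ioi t ∪ (fun x => -x) ⁻¹' Ioi t := by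
    ext x
    simp only [mem_ofPred_eq, mem_union, mem_Ioi, mem_preimage, lt_abs]
  have hsymm : gaussianReal 0 v ((fun x => -x) ⁻¹' Ioi t) = gaussianReal 0 v (Ioi t) := by
    rw [← Measure.map_apply measurable_neg measurableSet_Ioi, gaussianReal_map_neg, neg_zero]
  calc gaussianReal 0 v {x | t < |x|}
      ≤ gaussianReal 0 v (Ioi t) + gaussianReal 0 v (Ioi t) := by
        rw [hsplit]
        exact (measure_union_le _ _).trans_eq (by rw [hsymm])
    _ ≤ ENNReal.ofReal (v / t * gaussianPDFReal 0 v t)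
          + ENNReal.ofReal (v / t * gaussianPDFReal 0 v t) :=
        add_le_add (gaussianReal_Ioi_le v ht) (gaussianReal_Ioi_le v ht)
    _ = ENNReal.ofReal (2 * (v / t * gaussianPDFReal 0 v t)) := by
        rw [← ENNReal.ofReal_add hbound_nonneg hbound_nonneg, two_mul]

lemma gaussianPDFReal_mul_sqrt_two_log {σ N : ℝ} {v : ℝ≥0} (hv : (v : ℝ) = σ ^ 2) (hσ : 0 < σ)
    (hN : 1 ≤ N) : gaussianPDFReal 0 v (σ * √(2 * log N)) = (√(2 * π) * σ * N)⁻¹ := by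
  have hlog : 0 ≤ log N := log_nonneg hN
  have hexponent : -(σ * √(2 * log N) - 0) ^ 2 / (2 * v) = -log N := by
    rw [sub_zero, mul_pow, sq_sqrt (by positivity), hv]
    field_simp
  rw [gaussianPDFReal, hexponent, exp_neg, exp_log (by linarith), hv, sqrt_mul (by positivity),
    sqrt_sq hσ.le]
  ring

lemma natCast_mul_gaussianReal_abs_gt_mul_sqrt_two_log_le {σ : ℝ} {v : ℝ≥0}
    (hv : (v : ℝ) = σ ^ 2) (hσ : 0 < σ) {N : ℕ} (hN : 2 ≤ N) :
    N * gaussianReal 0 v {x | σ * √(2 * log N) < |x|} ≤ ENNReal.ofReal (1 / √(π * log N)) := by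
  have hlog : 0 < log N := log_pos (by exact_mod_cast hN)
  have hN0 : (0 : ℝ) < N := by positivity
  have ht : 0 < σ * √(2 * log N) := by positivity
  have hsqrt : 2 / (√(2 * π) * √(2 * log N)) = 1 / √(π * log N) := by
    rw [← sqrt_mul (by positivity), show 2 * π * (2 * log N) = 2 ^ 2 * (π * log N) by ring,
      sqrt_mul (by positivity), sqrt_sq zero_le_two]
    have : 0 < √(π * log N) := by positivity
    field_simp
  calc N * gaussianReal 0 v {x | σ * √(2 * log N) < |x|}
      ≤ N * ENNReal.ofReal (2 * (v / (σ * √(2 * log N)) *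
          gaussianPDFReal 0 v (σ * √(2 * log N)))) := by
        gcongr
        exact gaussianReal_abs_gt_le v ht
    _ = ENNReal.ofReal (1 / √(π * log N)) := by
        rw [← ENNReal.ofReal_natCast, ← ENNReal.ofReal_mul hN0.le,
          gaussianPDFReal_mul_sqrt_two_log hv hσ (by exact_mod_cast (by omega : 1 ≤ N)), hv,
          ← hsqrt]
        congr 1
        field_simp

end ProbabilityTheory

lemma tendsto_one_div_sqrt_pi_mul_log_atTop :
    Tendsto (fun N : ℕ => 1 / √(π * log N)) atTop (𝓝 0) := by
  simpa only [one_div, Function.comp_def] using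
    tendsto_inv_atTop_zero.comp <| tendsto_sqrt_atTop.comp <|
      (tendsto_log_atTop.comp tendsto_natCast_atTop_atTop).const_mul_atTop pi_pos

theorem universal_threshold_suppresses_noise_general
    (σ : ℝ) (hσ : 0 < σ)
    {Ωs : ℕ → Type*} [∀ N, MeasureSpace (Ωs N)]
    [∀ N, IsProbabilityMeasure (ℙ : Measure (Ωs N))]
    (X : (N : ℕ) → Fin N → Ωs N → ℝ)
    (hdist : ∀ N, 2 ≤ N → ∀ i, Measure.map (X N i) ℙ = gaussianReal 0 ⟨σ ^ 2, sq_nonneg σ⟩) :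
    Tendsto
      (fun N : ℕ =>
        ℙ {ω : Ωs N | ∃ i : Fin N, σ * Real.sqrt (2 * Real.log N) < |X N i ω|})
      atTop (nhds 0) := by
  have hbound : Tendsto (fun N : ℕ => ENNReal.ofReal (1 / √(π * log N))) atTop (𝓝 0) := by
    simpa using (ENNReal.tendsto_ofReal tendsto_one_div_sqrt_pi_mul_log_atTop)
  refine tendsto_of_tendsto_of_tendsto_of_le_of_le' tendsto_const_nhds hbound
    (Eventually.of_forall fun _ => zero_le) ?_
  filter_upwards [eventually_ge_atTop 2] with N hN
  have hlaw : ∀ i, HasLaw (X N i) (gaussianReal 0 ⟨σ ^ 2, sq_nonneg σ⟩ : Measure ℝ) := fun i =>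
    ⟨.of_map_ne_zero ((hdist N hN i).trans_ne (IsProbabilityMeasure.ne_zero (gaussianReal _ _))),
      hdist N hN i⟩
  calc ℙ {ω | ∃ i : Fin N, σ * √(2 * log N) < |X N i ω|}
      ≤ Fintype.card (Fin N) *
          gaussianReal 0 ⟨σ ^ 2, sq_nonneg σ⟩ {x | σ * √(2 * log N) < |x|} :=
        measure_exists_mem_le_card_mul hlaw (measurableSet_lt measurable_const measurable_abs)
    _ ≤ ENNReal.ofReal (1 / √(π * log N)) := by
        rw [Fintype.card_fin]
        exact natCast_mul_gaussianReal_abs_gt_mul_sqrt_two_log_le rfl hσ hN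

/-- The universal threshold suppresses all noise-only coefficients with probability
tending to one: if for each `N` the variables `X N 0, …, X N (N-1)` are independent
`N(0, σ²)` Gaussians, then
`P(max_i |X N i| > σ √(2 log N)) → 0` as `N → ∞`. -/
theorem universal_threshold_suppresses_noise
    (σ : ℝ) (hσ : 0 < σ)
    {Ωs : ℕ → Type*} [∀ N, MeasureSpace (Ωs N)]
    [∀ N, IsProbabilityMeasure (ℙ : Measure (Ωs N))]
    (X : (N : ℕ) → Fin N → Ωs N → ℝ)
    (hindep : ∀ N, 2 ≤ N → iIndepFun (X N) ℙ)
    (hdist : ∀ N, 2 ≤ N → ∀ i, Measure.map (X N i) ℙ = gaussianReal 0 ⟨σ ^ 2, sq_nonneg σ⟩) :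
    Tendsto
      (fun N : ℕ =>
        ℙ {ω : Ωs N | ∃ i : Fin N, σ * Real.sqrt (2 * Real.log N) < |X N i ω|})
      atTop (nhds 0) :=
  universal_threshold_suppresses_noise_general σ hσ X hdist
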